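/- Let Σ be a finite alphabet and let (A_i, B_i) ∈ ℝ^{n×n} × ℝ^{n×m} for i ∈ Σ. The discrete-time control switched system x(k+1) = A_{σ(k)} x(k) + B_{σ(k)} u(k) is mode-dependent feedback stabilizable (DFS) if and only if it is current-mode-dependent memory-feedback stabilizable (DFS_m). -/

import Mathlib

open Matrix Filter ENNReal

noncomputable section

/-- State history `[x(k), …, x(0)]` of the closed loop driven by the reversed
mode list `[i_{k-1}, …, i_0]`, under a current-mode-dependent memory controller `Ψd`
(which also sees the current mode). -/
def memHistD {n m : ℕ} {S : Type*} (A : S → Matrix (Fin n) (Fin n) ℝ)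
    (B : S → Matrix (Fin n) (Fin m) ℝ)
    (Ψd : List (EuclideanSpace ℝ (Fin n)) → List S → EuclideanSpace ℝ (Fin m))
    (x0 : EuclideanSpace ℝ (Fin n)) : List S → List (EuclideanSpace ℝ (Fin n))
  | [] => [x0]
  | i :: is =>
      WithLp.toLp 2 ((A i).mulVec ((memHistD A B Ψd x0 is).headD 0) +
        (B i).mulVec (Ψd (memHistD A B Ψd x0 is) (i :: is))) :: memHistD A B Ψd x0 is

/-- Closed-loop solution `φ(k, σ, x₀, Ψd)` under the switching signal `σ`:
at each step, `Ψd` receives the current and past states `(x(k), …, x(0))`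
and the current and past modes `(σ(k), …, σ(0))`. -/
def memTrajD {n m : ℕ} {S : Type*} (A : S → Matrix (Fin n) (Fin n) ℝ)
    (B : S → Matrix (Fin n) (Fin m) ℝ)
    (Ψd : List (EuclideanSpace ℝ (Fin n)) → List S → EuclideanSpace ℝ (Fin m))
    (x0 : EuclideanSpace ℝ (Fin n)) (σ : ℕ → S) (k : ℕ) : EuclideanSpace ℝ (Fin n) :=
  (memHistD A B Ψd x0 (((List.range k).reverse).map σ)).headD 0

/-!
A memoryless feedback is a memory feedback that ignores the past. Conversely, let `Ψ` stabilize
the system at rate `γ`, and fix `γ < g < ρ < 1`. Let `V x` be the infimum, over all pasts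
`(p, q)` that `Ψ` may be fed, of the worst-case discounted norm `sup_{σ, k} ‖x(k)‖ / g ^ k` of the
closed loop started at `x`. Then `‖x‖ ≤ V x ≤ M ‖x‖`. After one step from `x` in mode `i` with
the control `Ψ (x :: p) (i :: q)`, the rest of the run is a run of `Ψ` from the new state with the
longer past `(x :: p, i :: q)`, so the discounted cost drops by the factor `g`; taking `(p, q)`
nearly optimal yields a control `u` with `V (A_i x + B_i u) ≤ ρ V x`. Choosing such a `u` for
every `(i, x)` is a memoryless feedback with rate `ρ` and the same constant `M`.
-/

namespace SwitchedSystem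

variable {n m : ℕ} {S : Type*}

abbrev MemController (n m : ℕ) (S : Type*) :=
  List (EuclideanSpace ℝ (Fin n)) → List S → EuclideanSpace ℝ (Fin m)

def MemController.withPast (Ψ : MemController n m S) (p : List (EuclideanSpace ℝ (Fin n)))
    (q : List S) : MemController n m S :=
  fun xs is => Ψ (xs ++ p) (is ++ q)

@[simp]
lemma MemController.withPast_nil (Ψ : MemController n m S) : Ψ.withPast [] [] = Ψ := by
  funext xs is; simp [withPast]

def MemController.ofFeedback (Φ : S → EuclideanSpace ℝ (Fin n) → EuclideanSpace ℝ (Fin m)) :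
    MemController n m S
  | x :: _, i :: _ => Φ i x
  | _, _ => 0 -- never reached: `memHistD` only queries nonempty histories

variable (A : S → Matrix (Fin n) (Fin n) ℝ) (B : S → Matrix (Fin n) (Fin m) ℝ)

def step (i : S) (x : EuclideanSpace ℝ (Fin n)) (u : EuclideanSpace ℝ (Fin m)) :
    EuclideanSpace ℝ (Fin n) :=
  WithLp.toLp 2 ((A i).mulVec x + (B i).mulVec u)

lemma memHistD_cons (Ψ : MemController n m S) (x0 : EuclideanSpace ℝ (Fin n)) (i : S)
    (l : List S) :
    memHistD A B Ψ x0 (i :: l) =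
      step A B i ((memHistD A B Ψ x0 l).headD 0) (Ψ (memHistD A B Ψ x0 l) (i :: l)) ::
        memHistD A B Ψ x0 l :=
  rfl

lemma memHistD_ne_nil (Ψ : MemController n m S) (x0 : EuclideanSpace ℝ (Fin n)) (l : List S) :
    memHistD A B Ψ x0 l ≠ [] := by
  cases l <;> simp [memHistD]

/-- Time invariance: the first step of a run is absorbed into the remembered past. -/
lemma memHistD_append_singleton (Ψ : MemController n m S) (p : List (EuclideanSpace ℝ (Fin n)))
    (q : List S) (x0 : EuclideanSpace ℝ (Fin n)) (i : S) (l : List S) :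
    memHistD A B (Ψ.withPast p q) x0 (l ++ [i]) =
      memHistD A B (Ψ.withPast (x0 :: p) (i :: q))
        (step A B i x0 (Ψ (x0 :: p) (i :: q))) l ++ [x0] := by
  induction l with
  | nil => simp [memHistD, MemController.withPast, step]
  | cons j l ih =>
    obtain ⟨y, ys, hys⟩ := List.exists_cons_of_ne_nil (memHistD_ne_nil A B
      (Ψ.withPast (x0 :: p) (i :: q)) (step A B i x0 (Ψ (x0 :: p) (i :: q))) l)
    rw [List.cons_append, memHistD_cons, ih, hys, memHistD_cons, hys]
    simp [MemController.withPast]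

lemma memTrajD_zero (Ψ : MemController n m S) (x0 : EuclideanSpace ℝ (Fin n)) (σ : ℕ → S) :
    memTrajD A B Ψ x0 σ 0 = x0 :=
  rfl

lemma memTrajD_succ (Ψ : MemController n m S) (x0 : EuclideanSpace ℝ (Fin n)) (σ : ℕ → S)
    (k : ℕ) :
    memTrajD A B Ψ x0 σ (k + 1) =
      step A B (σ k) (memTrajD A B Ψ x0 σ k)
        (Ψ (memHistD A B Ψ x0 (((List.range k).reverse).map σ))
          (σ k :: ((List.range k).reverse).map σ)) := by
  simp [memTrajD, List.range_succ, memHistD_cons]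

lemma memTrajD_succ_eq_tail (Ψ : MemController n m S) (p : List (EuclideanSpace ℝ (Fin n)))
    (q : List S) (x0 : EuclideanSpace ℝ (Fin n)) (σ : ℕ → S) (k : ℕ) :
    memTrajD A B (Ψ.withPast p q) x0 σ (k + 1) =
      memTrajD A B (Ψ.withPast (x0 :: p) (σ 0 :: q))
        (step A B (σ 0) x0 (Ψ (x0 :: p) (σ 0 :: q))) (fun t => σ (t + 1)) k := by
  have hmodes : ((List.range (k + 1)).reverse).map σ =
      ((List.range k).reverse).map (fun t => σ (t + 1)) ++ [σ 0] := by
    simp [List.range_succ_eq_map, List.map_reverse]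
  rw [memTrajD, hmodes, memHistD_append_singleton, memTrajD]
  obtain ⟨y, ys, hys⟩ := List.exists_cons_of_ne_nil (memHistD_ne_nil A B
    (Ψ.withPast (x0 :: p) (σ 0 :: q)) (step A B (σ 0) x0 (Ψ (x0 :: p) (σ 0 :: q)))
    (((List.range k).reverse).map (fun t => σ (t + 1))))
  rw [hys]
  rfl

lemma memTrajD_ofFeedback_succ (Φ : S → EuclideanSpace ℝ (Fin n) → EuclideanSpace ℝ (Fin m))
    (x0 : EuclideanSpace ℝ (Fin n)) (σ : ℕ → S) (k : ℕ) :
    memTrajD A B (MemController.ofFeedback Φ) x0 σ (k + 1) =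
      step A B (σ k) (memTrajD A B (MemController.ofFeedback Φ) x0 σ k)
        (Φ (σ k) (memTrajD A B (MemController.ofFeedback Φ) x0 σ k)) := by
  obtain ⟨y, ys, hys⟩ := List.exists_cons_of_ne_nil
    (memHistD_ne_nil A B (MemController.ofFeedback Φ) x0 (((List.range k).reverse).map σ))
  rw [memTrajD_succ, memTrajD, hys]
  rfl

def FeedbackStabilizes (M γ : ℝ) (Φ : S → EuclideanSpace ℝ (Fin n) → EuclideanSpace ℝ (Fin m)) :
    Prop :=
  ∀ (x : ℕ → EuclideanSpace ℝ (Fin n)) (σ : ℕ → S),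
    (∀ k, x (k + 1) = (A (σ k)).mulVec (x k) + (B (σ k)).mulVec (Φ (σ k) (x k))) →
    ∀ k, ‖x k‖ ≤ M * γ ^ k * ‖x 0‖

def MemFeedbackStabilizes (M γ : ℝ) (Ψ : MemController n m S) : Prop :=
  ∀ (x0 : EuclideanSpace ℝ (Fin n)) (σ : ℕ → S) (k : ℕ),
    ‖memTrajD A B Ψ x0 σ k‖ ≤ M * γ ^ k * ‖x0‖

variable {A B}

lemma FeedbackStabilizes.memFeedbackStabilizes_ofFeedback {M γ : ℝ}
    {Φ : S → EuclideanSpace ℝ (Fin n) → EuclideanSpace ℝ (Fin m)}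
    (hΦ : FeedbackStabilizes A B M γ Φ) :
    MemFeedbackStabilizes A B M γ (MemController.ofFeedback Φ) := fun x0 σ k =>
  hΦ (memTrajD A B (MemController.ofFeedback Φ) x0 σ) σ
    (fun j => by rw [memTrajD_ofFeedback_succ]; rfl) k

lemma MemFeedbackStabilizes.mono {M γ γ' : ℝ} {Ψ : MemController n m S}
    (hΨ : MemFeedbackStabilizes A B M γ Ψ) (hM : 0 ≤ M) (hγ : 0 ≤ γ) (hγγ' : γ ≤ γ') :
    MemFeedbackStabilizes A B M γ' Ψ := fun x0 σ k =>
  (hΨ x0 σ k).trans (by gcongr)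

lemma exists_feedbackStabilizes_of_lyapunov (V : EuclideanSpace ℝ (Fin n) → ℝ≥0∞) {M ρ : ℝ}
    (hM : 0 ≤ M) (hρ : 0 ≤ ρ) (hlow : ∀ x, ‖x‖ₑ ≤ V x) (hup : ∀ x, V x ≤ ENNReal.ofReal M * ‖x‖ₑ)
    (hdec : ∀ i x, ∃ u, V (step A B i x u) ≤ ENNReal.ofReal ρ * V x) :
    ∃ Φ, FeedbackStabilizes A B M ρ Φ := by
  choose Φ hΦ using hdec
  refine ⟨Φ, fun x σ hx k => ?_⟩
  have hV : ∀ k, V (x k) ≤ ENNReal.ofReal ρ ^ k * V (x 0) := by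
    intro k
    induction k with
    | zero => simp
    | succ k ih =>
      have hstep : x (k + 1) = step A B (σ k) (x k) (Φ (σ k) (x k)) :=
        congrArg (WithLp.toLp 2) (hx k)
      calc V (x (k + 1)) ≤ ENNReal.ofReal ρ * V (x k) := hstep ▸ hΦ (σ k) (x k)
        _ ≤ ENNReal.ofReal ρ * (ENNReal.ofReal ρ ^ k * V (x 0)) := by gcongr
        _ = ENNReal.ofReal ρ ^ (k + 1) * V (x 0) := by rw [pow_succ', mul_assoc]
  have h : ENNReal.ofReal ‖x k‖ ≤ ENNReal.ofReal (M * ρ ^ k * ‖x 0‖) := by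
    calc ENNReal.ofReal ‖x k‖ = ‖x k‖ₑ := ofReal_norm _
      _ ≤ ENNReal.ofReal ρ ^ k * V (x 0) := (hlow _).trans (hV k)
      _ ≤ ENNReal.ofReal ρ ^ k * (ENNReal.ofReal M * ‖x 0‖ₑ) := by gcongr; exact hup _
      _ = ENNReal.ofReal (M * ρ ^ k * ‖x 0‖) := by
        rw [← ofReal_norm, ← ENNReal.ofReal_pow hρ, ← ENNReal.ofReal_mul hM,
          ← ENNReal.ofReal_mul (by positivity)]
        ring_nf
  exact (ENNReal.ofReal_le_ofReal_iff (by positivity)).mp h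

section ValueFunction

variable (A B) (Ψ : MemController n m S) (g : ℝ≥0∞)

def discountedCost (p : List (EuclideanSpace ℝ (Fin n))) (q : List S)
    (x : EuclideanSpace ℝ (Fin n)) : ℝ≥0∞ :=
  ⨆ (σ : ℕ → S) (k : ℕ), ‖memTrajD A B (Ψ.withPast p q) x σ k‖ₑ / g ^ k

def valueFn (x : EuclideanSpace ℝ (Fin n)) : ℝ≥0∞ :=
  ⨅ (p : List (EuclideanSpace ℝ (Fin n))) (q : List S), discountedCost A B Ψ g p q x

lemma enorm_le_discountedCost [Nonempty S] (p : List (EuclideanSpace ℝ (Fin n))) (q : List S)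
    (x : EuclideanSpace ℝ (Fin n)) : ‖x‖ₑ ≤ discountedCost A B Ψ g p q x := by
  inhabit S
  calc ‖x‖ₑ = ‖memTrajD A B (Ψ.withPast p q) x (fun _ => default) 0‖ₑ / g ^ 0 := by
        rw [memTrajD_zero, pow_zero, div_one]
    _ ≤ discountedCost A B Ψ g p q x := le_iSup₂_of_le (fun _ => default) 0 le_rfl

lemma enorm_le_valueFn [Nonempty S] (x : EuclideanSpace ℝ (Fin n)) :
    ‖x‖ₑ ≤ valueFn A B Ψ g x :=
  le_iInf₂ fun p q => enorm_le_discountedCost A B Ψ g p q x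

lemma valueFn_le_discountedCost (p : List (EuclideanSpace ℝ (Fin n))) (q : List S)
    (x : EuclideanSpace ℝ (Fin n)) : valueFn A B Ψ g x ≤ discountedCost A B Ψ g p q x :=
  iInf₂_le (f := fun p q => discountedCost A B Ψ g p q x) p q

lemma discountedCost_step_le (hg0 : g ≠ 0) (hgt : g ≠ ∞) (p : List (EuclideanSpace ℝ (Fin n)))
    (q : List S) (x : EuclideanSpace ℝ (Fin n)) (i : S) :
    discountedCost A B Ψ g (x :: p) (i :: q) (step A B i x (Ψ (x :: p) (i :: q))) ≤
      g * discountedCost A B Ψ g p q x := by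
  refine iSup₂_le fun σ k => ?_
  let σ' : ℕ → S := fun t => Nat.casesOn t i σ
  have hshift : memTrajD A B (Ψ.withPast p q) x σ' (k + 1) =
      memTrajD A B (Ψ.withPast (x :: p) (i :: q)) (step A B i x (Ψ (x :: p) (i :: q))) σ k :=
    memTrajD_succ_eq_tail A B Ψ p q x σ' k
  calc _ = g * (‖memTrajD A B (Ψ.withPast p q) x σ' (k + 1)‖ₑ / g ^ (k + 1)) := by
        rw [hshift, ← mul_div_assoc, pow_succ', ENNReal.mul_div_mul_left _ _ hg0 hgt]
    _ ≤ g * discountedCost A B Ψ g p q x := by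
      gcongr
      exact le_iSup₂_of_le σ' (k + 1) le_rfl

lemma exists_discountedCost_le [Nonempty S] (hg0 : g ≠ 0) (hgt : g ≠ ∞) {g₁ : ℝ≥0∞}
    (hgg₁ : g < g₁) {C : ℝ≥0∞} (hC : C ≠ ∞)
    (hbound : ∀ x, discountedCost A B Ψ g [] [] x ≤ C * ‖x‖ₑ) (x : EuclideanSpace ℝ (Fin n)) :
    ∃ p q, g * discountedCost A B Ψ g p q x ≤ g₁ * valueFn A B Ψ g x := by
  rcases eq_or_ne (valueFn A B Ψ g x) 0 with hx | hx
  · have hx0 : ‖x‖ₑ = 0 := le_antisymm (hx ▸ enorm_le_valueFn A B Ψ g x) bot_le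
    have hcost : discountedCost A B Ψ g [] [] x = 0 :=
      le_antisymm ((hbound x).trans_eq (by rw [hx0, mul_zero])) bot_le
    exact ⟨[], [], by rw [hcost, hx, mul_zero, mul_zero]⟩
  · have hfin : valueFn A B Ψ g x ≠ ∞ := ne_top_of_le_ne_top (ENNReal.mul_ne_top hC enorm_ne_top)
      ((valueFn_le_discountedCost A B Ψ g [] [] x).trans (hbound x))
    have hlt : g * valueFn A B Ψ g x < g₁ * valueFn A B Ψ g x :=
      ENNReal.mul_lt_mul_left hx hfin hgg₁
    simp only [valueFn, ENNReal.mul_iInf_of_ne hg0 hgt, iInf_lt_iff] at hlt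
    obtain ⟨p, q, hpq⟩ := hlt
    exact ⟨p, q, hpq.le⟩

lemma exists_step_valueFn_le [Nonempty S] (hg0 : g ≠ 0) (hgt : g ≠ ∞) {g₁ : ℝ≥0∞}
    (hgg₁ : g < g₁) {C : ℝ≥0∞} (hC : C ≠ ∞)
    (hbound : ∀ x, discountedCost A B Ψ g [] [] x ≤ C * ‖x‖ₑ) (i : S)
    (x : EuclideanSpace ℝ (Fin n)) :
    ∃ u, valueFn A B Ψ g (step A B i x u) ≤ g₁ * valueFn A B Ψ g x := by
  obtain ⟨p, q, hpq⟩ := exists_discountedCost_le A B Ψ g hg0 hgt hgg₁ hC hbound x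
  exact ⟨Ψ (x :: p) (i :: q), (valueFn_le_discountedCost A B Ψ g _ _ _).trans
    ((discountedCost_step_le A B Ψ g hg0 hgt p q x i).trans hpq)⟩

end ValueFunction

lemma MemFeedbackStabilizes.discountedCost_nil_le {M γ : ℝ} {Ψ : MemController n m S}
    (hΨ : MemFeedbackStabilizes A B M γ Ψ) (hγ : 0 < γ) (x : EuclideanSpace ℝ (Fin n)) :
    discountedCost A B Ψ (ENNReal.ofReal γ) [] [] x ≤ ENNReal.ofReal M * ‖x‖ₑ := by
  refine iSup₂_le fun σ k => ?_
  rw [MemController.withPast_nil, ENNReal.div_le_iff (by simp [hγ]) (by simp)]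
  calc ‖memTrajD A B Ψ x σ k‖ₑ = ENNReal.ofReal ‖memTrajD A B Ψ x σ k‖ := (ofReal_norm _).symm
    _ ≤ ENNReal.ofReal (M * γ ^ k * ‖x‖) := ENNReal.ofReal_le_ofReal (hΨ x σ k)
    _ = ENNReal.ofReal M * ‖x‖ₑ * ENNReal.ofReal γ ^ k := by
      rw [← ofReal_norm, ← ENNReal.ofReal_pow hγ.le, mul_right_comm,
        ENNReal.ofReal_mul' (by positivity), ENNReal.ofReal_mul' (by positivity)]

theorem MemFeedbackStabilizes.exists_feedbackStabilizes [Nonempty S] {M γ : ℝ}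
    {Ψ : MemController n m S} (hΨ : MemFeedbackStabilizes A B M γ Ψ) (hM : 0 ≤ M)
    (hγ0 : 0 ≤ γ) (hγ1 : γ < 1) :
    ∃ ρ ∈ Set.Ico (0 : ℝ) 1, ∃ Φ, FeedbackStabilizes A B M ρ Φ := by
  obtain ⟨g, hγg, hg1⟩ := exists_between hγ1
  obtain ⟨ρ, hgρ, hρ1⟩ := exists_between hg1
  have hg : 0 < g := hγ0.trans_lt hγg
  have hΨg : MemFeedbackStabilizes A B M g Ψ := hΨ.mono hM hγ0 hγg.le
  set g' := ENNReal.ofReal g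
  have hup : ∀ x, valueFn A B Ψ g' x ≤ ENNReal.ofReal M * ‖x‖ₑ := fun x =>
    (valueFn_le_discountedCost A B Ψ g' [] [] x).trans (hΨg.discountedCost_nil_le hg x)
  have hdec : ∀ i x, ∃ u,
      valueFn A B Ψ g' (step A B i x u) ≤ ENNReal.ofReal ρ * valueFn A B Ψ g' x :=
    exists_step_valueFn_le A B Ψ g' (by simp [g', hg]) ENNReal.ofReal_ne_top
      (ENNReal.ofReal_lt_ofReal_iff (hg.trans hgρ) |>.mpr hgρ) ENNReal.ofReal_ne_top
      (hΨg.discountedCost_nil_le hg)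
  exact ⟨ρ, ⟨(hg.trans hgρ).le, hρ1⟩, exists_feedbackStabilizes_of_lyapunov _ hM
    (hg.trans hgρ).le (enorm_le_valueFn A B Ψ g') hup hdec⟩

end SwitchedSystem

open SwitchedSystem

theorem dfs_iff_dfs_mem_general {n m : ℕ} {S : Type*} [Nonempty S]
    (A : S → Matrix (Fin n) (Fin n) ℝ) (B : S → Matrix (Fin n) (Fin m) ℝ) :
    (∃ M > (0 : ℝ), ∃ γ ∈ Set.Ico (0 : ℝ) 1,
      ∃ Φd : S → EuclideanSpace ℝ (Fin n) → EuclideanSpace ℝ (Fin m),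
        ∀ (x : ℕ → EuclideanSpace ℝ (Fin n)) (σ : ℕ → S),
          (∀ k, x (k + 1) = (A (σ k)).mulVec (x k) + (B (σ k)).mulVec (Φd (σ k) (x k))) →
          ∀ k, ‖x k‖ ≤ M * γ ^ k * ‖x 0‖) ↔
    (∃ M > (0 : ℝ), ∃ γ ∈ Set.Ico (0 : ℝ) 1,
      ∃ Ψd : List (EuclideanSpace ℝ (Fin n)) → List S → EuclideanSpace ℝ (Fin m),
        ∀ (x0 : EuclideanSpace ℝ (Fin n)) (σ : ℕ → S) (k : ℕ),
          ‖memTrajD A B Ψd x0 σ k‖ ≤ M * γ ^ k * ‖x0‖) := by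
  constructor
  · rintro ⟨M, hM, γ, hγ, Φ, hΦ⟩
    exact ⟨M, hM, γ, hγ, _, FeedbackStabilizes.memFeedbackStabilizes_ofFeedback hΦ⟩
  · rintro ⟨M, hM, γ, ⟨hγ0, hγ1⟩, Ψ, hΨ⟩
    obtain ⟨ρ, hρ, Φ, hΦ⟩ :=
      MemFeedbackStabilizes.exists_feedbackStabilizes (A := A) (B := B) hΨ hM.le hγ0 hγ1
    exact ⟨M, hM, ρ, hρ, Φ, hΦ⟩

/-- A switched linear system is mode-dependent feedback
stabilizable (DFS) iff it is current-mode-dependent memory-feedback stabilizable (DFS_m). -/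
theorem dfs_iff_dfs_mem {n m : ℕ} (hn : 0 < n) (hm : 0 < m) {S : Type*} [Fintype S] [Nonempty S]
    (A : S → Matrix (Fin n) (Fin n) ℝ) (B : S → Matrix (Fin n) (Fin m) ℝ) :
    (∃ M > (0 : ℝ), ∃ γ ∈ Set.Ico (0 : ℝ) 1,
      ∃ Φd : S → EuclideanSpace ℝ (Fin n) → EuclideanSpace ℝ (Fin m),
        ∀ (x : ℕ → EuclideanSpace ℝ (Fin n)) (σ : ℕ → S),
          (∀ k, x (k + 1) = (A (σ k)).mulVec (x k) + (B (σ k)).mulVec (Φd (σ k) (x k))) →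
          ∀ k, ‖x k‖ ≤ M * γ ^ k * ‖x 0‖) ↔
    (∃ M > (0 : ℝ), ∃ γ ∈ Set.Ico (0 : ℝ) 1,
      ∃ Ψd : List (EuclideanSpace ℝ (Fin n)) → List S → EuclideanSpace ℝ (Fin m),
        ∀ (x0 : EuclideanSpace ℝ (Fin n)) (σ : ℕ → S) (k : ℕ),
          ‖memTrajD A B Ψd x0 σ k‖ ≤ M * γ ^ k * ‖x0‖) :=
  dfs_iff_dfs_mem_general A B
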